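/- arXiv:1912.04644 — 2 statements merged into one kernel-verified Lean document; each statement's English description precedes it below -/
import Mathlib

section
/- Let X and Y be real Hilbert spaces and let a : X×Y → ℝ∪{+∞} be such that for every y ∈ Y the function a(·,y) is proper Φ_lsc-convex on X, and for every x ∈ X the function a(x,·) is concave on Y. Set β := inf_{x∈X} sup_{y∈Y} a(x,y) and assume β < +∞. If there exist y₁, y₂ ∈ Y and x̄ ∈ dom(a(·,y₁)) ∩ dom(a(·,y₂)) with a(x̄,y₁) ≥ β and a(x̄,y₂) ≥ β such that (0,0) ∈ co(∂_lsc a(·,y₁)(x̄) ∪ ∂_lsc a(·,y₂)(x̄)), then sup_{y∈Y} inf_{x∈X} a(x,y) = inf_{x∈X} sup_{y∈Y} a(x,y). -/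
open scoped RealInnerProductSpace

noncomputable section

/-- The class `Φ_lsc` of continuous functions `x ↦ -a‖x‖² + ⟪v,x⟫ + c` with `a ≥ 0`. -/
def PhiLsc (X : Type*) [NormedAddCommGroup X] [InnerProductSpace ℝ X] : Set (X → ℝ) :=
  {φ | ∃ a : ℝ, ∃ v : X, ∃ c : ℝ, 0 ≤ a ∧ ∀ x, φ x = -a * ‖x‖ ^ 2 + ⟪v, x⟫ + c}

/-- The support set `supp(f) = {φ ∈ Φ_lsc : φ ≤ f}` of `f : X → ℝ∪{+∞}`. -/
def PhiSupp {X : Type*} [NormedAddCommGroup X] [InnerProductSpace ℝ X] (f : X → EReal) :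
    Set (X → ℝ) :=
  {φ | φ ∈ PhiLsc X ∧ ∀ x, (φ x : EReal) ≤ f x}

/-- The effective domain of `f`. -/
def PhiDom {X : Type*} (f : X → EReal) : Set X := {x | f x < ⊤}

/-- `f` is `Φ_lsc`-convex: it is the pointwise supremum of its support set. -/
def PhiConvexOn {X : Type*} [NormedAddCommGroup X] [InnerProductSpace ℝ X] (f : X → EReal) :
    Prop :=
  ∀ x, f x = ⨆ φ ∈ PhiSupp f, (φ x : EReal)

/-- The set of `ε`-`Φ_lsc`-subgradients of `f` at `xb`:
pairs `(a,v)`, `a ≥ 0`, with `f x - f xb ≥ ⟪v, x - xb⟫ - a‖x‖² + a‖xb‖² - ε` for all `x`. -/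
def SubLscE {X : Type*} [NormedAddCommGroup X] [InnerProductSpace ℝ X] (f : X → EReal)
    (ε : ℝ) (xb : X) : Set (ℝ × X) :=
  {p | 0 ≤ p.1 ∧ ∀ x : X,
    f xb + ((⟪p.2, x - xb⟫ - p.1 * ‖x‖ ^ 2 + p.1 * ‖xb‖ ^ 2 - ε : ℝ) : EReal) ≤ f x}

/-- The set of local `Φ_lsc`-subgradients of `f` at `xb`. -/
def SubLscLoc {X : Type*} [NormedAddCommGroup X] [InnerProductSpace ℝ X] (f : X → EReal)
    (xb : X) : Set (ℝ × X) :=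
  {p | 0 ≤ p.1 ∧ ∃ δ : ℝ, 0 < δ ∧ ∀ x : X, ‖x - xb‖ < δ →
    f xb + ((⟪p.2, x - xb⟫ - p.1 * ‖x‖ ^ 2 + p.1 * ‖xb‖ ^ 2 : ℝ) : EReal) ≤ f x}

/-- `f` is paraconvex (with exponent 2). -/
def ParaconvexOn {X : Type*} [NormedAddCommGroup X] [InnerProductSpace ℝ X]
    (f : X → EReal) : Prop :=
  ∃ C : ℝ, 0 < C ∧ ∀ x y : X, ∀ t : ℝ, t ∈ Set.Icc (0 : ℝ) 1 →
    f (t • x + (1 - t) • y) ≤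
      (t : EReal) * f x + ((1 - t : ℝ) : EReal) * f y + ((C * ‖x - y‖ ^ 2 : ℝ) : EReal)

/-- The proximal subdifferential of `f` at `xb`. -/
def ProxSub {X : Type*} [NormedAddCommGroup X] [InnerProductSpace ℝ X] (f : X → EReal)
    (xb : X) : Set X :=
  {v | ∃ δ : ℝ, 0 < δ ∧ ∃ ρ : ℝ, 0 ≤ ρ ∧ ∀ x : X, ‖x - xb‖ < δ →
    f xb + ((⟪v, x - xb⟫ - ρ / 2 * ‖x - xb‖ ^ 2 : ℝ) : EReal) ≤ f x}

/-- The Dini subdifferential of `f` at `xb`. -/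
def DiniSub {X : Type*} [NormedAddCommGroup X] [InnerProductSpace ℝ X] (f : X → EReal)
    (xb : X) : Set X :=
  {w | ∀ h : X, ∀ t : ℕ → ℝ, ∀ u : ℕ → X, (∀ n, 0 < t n) →
    Filter.Tendsto t Filter.atTop (nhds 0) → Filter.Tendsto u Filter.atTop (nhds h) →
    ((⟪w, h⟫ : ℝ) : EReal) ≤
      Filter.liminf (fun n => (f (xb + t n • u n) - f xb) * (((t n)⁻¹ : ℝ) : EReal)) Filter.atTop}

/-- The `Φ_lsc`-subgradients of a real-valued `f` at `xb`. -/
def SubLscR {X : Type*} [NormedAddCommGroup X] [InnerProductSpace ℝ X] (f : X → ℝ)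
    (xb : X) : Set (ℝ × X) :=
  {p | 0 ≤ p.1 ∧ ∀ x : X,
    ⟪p.2, x - xb⟫ - p.1 * ‖x‖ ^ 2 + p.1 * ‖xb‖ ^ 2 ≤ f x - f xb}

/-!
Fix a real `c < β = inf_x sup_y a(x, y)`. For `p = (r, v)` let
`ℓ_p(x) = ⟪v, x - x̄⟫ - r‖x‖² + r‖x̄‖²`, which is linear in `p`. The pairs `p` for which
`c + ℓ_p ≤ a(·, y)` for some `y` form a convex set, because `a(x, ·)` is concave; it contains
both subdifferentials at `x̄`, since `c ≤ a(x̄, yᵢ)`. Hence it contains `(0, 0)`, which yields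
a `y` with `c ≤ inf_x a(x, y)`.
-/

section

variable {X : Type*} [NormedAddCommGroup X] [InnerProductSpace ℝ X]

def phiLscIncrement (xb x : X) : ℝ × X →ₗ[ℝ] ℝ where
  toFun p := ⟪p.2, x - xb⟫ - p.1 * ‖x‖ ^ 2 + p.1 * ‖xb‖ ^ 2
  map_add' p q := by
    simp only [Prod.fst_add, Prod.snd_add, inner_add_left]
    ring
  map_smul' t p := by
    simp only [Prod.smul_fst, Prod.smul_snd, real_inner_smul_left, smul_eq_mul, RingHom.id_apply]
    ring

variable {Y : Type*}

def minorantPairs (a : X × Y → EReal) (c : ℝ) (xb : X) : Set (ℝ × X) :=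
  {p | ∃ y, ∀ x, ((c + phiLscIncrement xb x p : ℝ) : EReal) ≤ a (x, y)}

lemma subLscE_zero_subset_minorantPairs {a : X × Y → EReal} {c : ℝ} {xb : X} {y : Y}
    (hc : (c : EReal) ≤ a (xb, y)) :
    SubLscE (fun x => a (x, y)) 0 xb ⊆ minorantPairs a c xb := by
  rintro p ⟨-, hp⟩
  refine ⟨y, fun x => ?_⟩
  calc ((c + phiLscIncrement xb x p : ℝ) : EReal)
      ≤ a (xb, y) + ((phiLscIncrement xb x p - 0 : ℝ) : EReal) := by
        rw [sub_zero, EReal.coe_add]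
        gcongr
    _ ≤ a (x, y) := hp x

lemma le_iSup_iInf_of_zero_mem_minorantPairs {a : X × Y → EReal} {c : ℝ} {xb : X}
    (h : (0 : ℝ × X) ∈ minorantPairs a c xb) : (c : EReal) ≤ ⨆ y, ⨅ x, a (x, y) := by
  obtain ⟨y, hy⟩ := h
  refine le_iSup_of_le y (le_iInf fun x => ?_)
  simpa only [map_zero, add_zero] using hy x

variable [AddCommGroup Y] [Module ℝ Y]

lemma convex_minorantPairs {a : X × Y → EReal}
    (hconc : ∀ x : X, ∀ y₁ y₂ : Y, ∀ t ∈ Set.Icc (0 : ℝ) 1,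
      (t : EReal) * a (x, y₁) + ((1 - t : ℝ) : EReal) * a (x, y₂) ≤
        a (x, t • y₁ + (1 - t) • y₂))
    (c : ℝ) (xb : X) : Convex ℝ (minorantPairs a c xb) := by
  rintro p ⟨y₁, hp⟩ q ⟨y₂, hq⟩ t s ht hs hts
  obtain rfl : s = 1 - t := by linarith
  refine ⟨t • y₁ + (1 - t) • y₂, fun x => ?_⟩
  have hsplit : c + phiLscIncrement xb x (t • p + (1 - t) • q) =
      t * (c + phiLscIncrement xb x p) + (1 - t) * (c + phiLscIncrement xb x q) := by
    simp only [map_add, map_smul, smul_eq_mul]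
    ring
  calc ((c + phiLscIncrement xb x (t • p + (1 - t) • q) : ℝ) : EReal)
      = (t : EReal) * ((c + phiLscIncrement xb x p : ℝ) : EReal) +
          ((1 - t : ℝ) : EReal) * ((c + phiLscIncrement xb x q : ℝ) : EReal) := by
        rw [hsplit, EReal.coe_add, EReal.coe_mul, EReal.coe_mul]
    _ ≤ (t : EReal) * a (x, y₁) + ((1 - t : ℝ) : EReal) * a (x, y₂) :=
        add_le_add (mul_le_mul_of_nonneg_left (hp x) (mod_cast ht))
          (mul_le_mul_of_nonneg_left (hq x) (mod_cast hs))
    _ ≤ a (x, t • y₁ + (1 - t) • y₂) := hconc x y₁ y₂ t ⟨ht, by linarith⟩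

end

theorem stmt_17_general {X : Type*} [NormedAddCommGroup X] [InnerProductSpace ℝ X]
    {Y : Type*} [NormedAddCommGroup Y] [InnerProductSpace ℝ Y]
    (a : X × Y → EReal)
    (hconc : ∀ x : X, ∀ y₁ y₂ : Y, ∀ t ∈ Set.Icc (0 : ℝ) 1,
      (t : EReal) * a (x, y₁) + ((1 - t : ℝ) : EReal) * a (x, y₂) ≤
        a (x, t • y₁ + (1 - t) • y₂))
    (hzs : ∃ y₁ y₂ : Y, ∃ xb : X,
      xb ∈ PhiDom (fun x => a (x, y₁)) ∧ xb ∈ PhiDom (fun x => a (x, y₂)) ∧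
      (⨅ x : X, ⨆ y : Y, a (x, y)) ≤ a (xb, y₁) ∧
      (⨅ x : X, ⨆ y : Y, a (x, y)) ≤ a (xb, y₂) ∧
      ((0, 0) : ℝ × X) ∈ convexHull ℝ
        (SubLscE (fun x => a (x, y₁)) 0 xb ∪ SubLscE (fun x => a (x, y₂)) 0 xb)) :
    (⨆ y : Y, ⨅ x : X, a (x, y)) = ⨅ x : X, ⨆ y : Y, a (x, y) := by
  refine le_antisymm (iSup_iInf_le_iInf_iSup fun y x => a (x, y)) ?_
  obtain ⟨y₁, y₂, xb, -, -, hb₁, hb₂, hzero⟩ := hzs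
  refine EReal.ge_of_forall_gt_iff_ge.mp fun c hc => ?_
  have hsub : SubLscE (fun x => a (x, y₁)) 0 xb ∪ SubLscE (fun x => a (x, y₂)) 0 xb ⊆
      minorantPairs a c xb :=
    Set.union_subset (subLscE_zero_subset_minorantPairs (hc.le.trans hb₁))
      (subLscE_zero_subset_minorantPairs (hc.le.trans hb₂))
  exact le_iSup_iInf_of_zero_mem_minorantPairs
    (convexHull_min hsub (convex_minorantPairs hconc c xb) hzero)

/-- the exact zero subgradient condition (`ε = 0`) at the level
`β = inf sup < +∞` is a sufficient condition for the minimax equality. -/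
theorem stmt_17 {X : Type*} [NormedAddCommGroup X] [InnerProductSpace ℝ X] [CompleteSpace X]
    {Y : Type*} [NormedAddCommGroup Y] [InnerProductSpace ℝ Y] [CompleteSpace Y]
    (a : X × Y → EReal) (hbot : ∀ p, a p ≠ ⊥)
    (hconv : ∀ y : Y, PhiConvexOn (fun x => a (x, y)))
    (hsupp : ∀ y : Y, (PhiSupp (fun x => a (x, y))).Nonempty)
    (hdom : ∀ y : Y, (PhiDom (fun x => a (x, y))).Nonempty)
    (hconc : ∀ x : X, ∀ y₁ y₂ : Y, ∀ t ∈ Set.Icc (0 : ℝ) 1,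
      (t : EReal) * a (x, y₁) + ((1 - t : ℝ) : EReal) * a (x, y₂) ≤
        a (x, t • y₁ + (1 - t) • y₂))
    (hβ : (⨅ x : X, ⨆ y : Y, a (x, y)) < ⊤)
    (hzs : ∃ y₁ y₂ : Y, ∃ xb : X,
      xb ∈ PhiDom (fun x => a (x, y₁)) ∧ xb ∈ PhiDom (fun x => a (x, y₂)) ∧
      (⨅ x : X, ⨆ y : Y, a (x, y)) ≤ a (xb, y₁) ∧
      (⨅ x : X, ⨆ y : Y, a (x, y)) ≤ a (xb, y₂) ∧
      ((0, 0) : ℝ × X) ∈ convexHull ℝ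
        (SubLscE (fun x => a (x, y₁)) 0 xb ∪ SubLscE (fun x => a (x, y₂)) 0 xb)) :
    (⨆ y : Y, ⨅ x : X, a (x, y)) = ⨅ x : X, ⨆ y : Y, a (x, y) :=
  stmt_17_general a hconc hzs
end
end

section
/- Let X and Y be real Hilbert spaces and let a : X×Y → ℝ∪{+∞} be such that for every y ∈ Y the function a(·,y) is proper, lower semicontinuous and paraconvex on X, and for every x ∈ X the function a(x,·) is concave on Y. Set β := inf_{x∈X} sup_{y∈Y} a(x,y) and assume β < +∞. If there exist y₁, y₂ ∈ Y and x̄ in the interior of dom(a(·,y₁)) intersected with the interior of dom(a(·,y₂)), with a(x̄,y₁) ≥ β and a(x̄,y₂) ≥ β, such that (0,0) ∈ co(∂_lsc a(·,y₁)(x̄) ∪ ∂_lsc a(·,y₂)(x̄)), then sup_{y∈Y} inf_{x∈X} a(x,y) = inf_{x∈X} sup_{y∈Y} a(x,y). -/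
open scoped RealInnerProductSpace

noncomputable section

lemma subLscE_convex {X : Type*} [NormedAddCommGroup X] [InnerProductSpace ℝ X]
    (f : X → EReal) (xb : X) (c : ℝ) (hc : f xb = (c : EReal)) :
    Convex ℝ (SubLscE f 0 xb) := by
  rintro p hp q hq s u hs hu hsu
  refine ⟨?_, fun x => ?_⟩
  · have h1 := hp.1; have h2 := hq.1
    simpa [smul_eq_mul] using add_nonneg (mul_nonneg hs h1) (mul_nonneg hu h2)
  · set A : ℝ := ⟪p.2, x - xb⟫ - p.1 * ‖x‖ ^ 2 + p.1 * ‖xb‖ ^ 2 - 0 with hA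
    set B : ℝ := ⟪q.2, x - xb⟫ - q.1 * ‖x‖ ^ 2 + q.1 * ‖xb‖ ^ 2 - 0 with hB
    have hpA : ((c + A : ℝ) : EReal) ≤ f x := by
      have := hp.2 x; rwa [hc, ← EReal.coe_add] at this
    have hqB : ((c + B : ℝ) : EReal) ≤ f x := by
      have := hq.2 x; rwa [hc, ← EReal.coe_add] at this
    have hG : (⟪(s • p + u • q).2, x - xb⟫ - (s • p + u • q).1 * ‖x‖ ^ 2
        + (s • p + u • q).1 * ‖xb‖ ^ 2 - 0 : ℝ) = s * A + u * B := by
      simp only [Prod.snd_add, Prod.fst_add, Prod.smul_snd, Prod.smul_fst, smul_eq_mul,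
        inner_add_left, real_inner_smul_left, hA, hB]
      ring
    rw [hc, hG, ← EReal.coe_add]
    have hcG : c + (s * A + u * B) = s * (c + A) + u * (c + B) := by
      linear_combination (-c) * hsu
    rw [hcG]
    rcases le_total (c + A) (c + B) with h | h
    · calc ((s * (c + A) + u * (c + B) : ℝ) : EReal)
          ≤ ((c + B : ℝ) : EReal) := by
            apply EReal.coe_le_coe_iff.2
            have h' : s * (c + A) ≤ s * (c + B) := mul_le_mul_of_nonneg_left h hs
            have h'' : s * (c + B) + u * (c + B) = c + B := by
              rw [← add_mul, hsu, one_mul]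
            linarith
        _ ≤ f x := hqB
    · calc ((s * (c + A) + u * (c + B) : ℝ) : EReal)
          ≤ ((c + A : ℝ) : EReal) := by
            apply EReal.coe_le_coe_iff.2
            have h' : u * (c + B) ≤ u * (c + A) := mul_le_mul_of_nonneg_left h hu
            have h'' : s * (c + A) + u * (c + A) = c + A := by
              rw [← add_mul, hsu, one_mul]
            linarith
        _ ≤ f x := hpA

/-- minimax theorem for paraconvex functions — the exact zero subgradient
condition at an interior point of the domains, at the level `β = inf sup < +∞`, is a
sufficient condition for the minimax equality. -/

theorem stmt_19 {X : Type*} [NormedAddCommGroup X] [InnerProductSpace ℝ X] [CompleteSpace X]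
    {Y : Type*} [NormedAddCommGroup Y] [InnerProductSpace ℝ Y] [CompleteSpace Y]
    (a : X × Y → EReal) (hbot : ∀ p, a p ≠ ⊥)
    (hpara : ∀ y : Y, ParaconvexOn (fun x => a (x, y)))
    (hlsc : ∀ y : Y, LowerSemicontinuous (fun x => a (x, y)))
    (hsupp : ∀ y : Y, (PhiSupp (fun x => a (x, y))).Nonempty)
    (hdom : ∀ y : Y, (PhiDom (fun x => a (x, y))).Nonempty)
    (hconc : ∀ x : X, ∀ y₁ y₂ : Y, ∀ t ∈ Set.Icc (0 : ℝ) 1,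
      (t : EReal) * a (x, y₁) + ((1 - t : ℝ) : EReal) * a (x, y₂) ≤
        a (x, t • y₁ + (1 - t) • y₂))
    (hβ : (⨅ x : X, ⨆ y : Y, a (x, y)) < ⊤)
    (hzs : ∃ y₁ y₂ : Y, ∃ xb : X,
      xb ∈ interior (PhiDom (fun x => a (x, y₁))) ∧
      xb ∈ interior (PhiDom (fun x => a (x, y₂))) ∧
      (⨅ x : X, ⨆ y : Y, a (x, y)) ≤ a (xb, y₁) ∧
      (⨅ x : X, ⨆ y : Y, a (x, y)) ≤ a (xb, y₂) ∧
      ((0, 0) : ℝ × X) ∈ convexHull ℝ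
        (SubLscE (fun x => a (x, y₁)) 0 xb ∪ SubLscE (fun x => a (x, y₂)) 0 xb)) :
    (⨆ y : Y, ⨅ x : X, a (x, y)) = ⨅ x : X, ⨆ y : Y, a (x, y) := by
  
  classical
  obtain ⟨y₁, y₂, xb, hi₁, hi₂, hb₁, hb₂, hco⟩ := hzs
  set β := ⨅ x : X, ⨆ y : Y, a (x, y) with hβdef
  -- finiteness at xb
  have hd₁' : xb ∈ PhiDom (fun x => a (x, y₁)) := interior_subset hi₁
  have hd₂' : xb ∈ PhiDom (fun x => a (x, y₂)) := interior_subset hi₂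
  have hd₁ : a (xb, y₁) < ⊤ := hd₁'
  have hd₂ : a (xb, y₂) < ⊤ := hd₂'
  set c₁ : ℝ := (a (xb, y₁)).toReal with hc₁def
  set c₂ : ℝ := (a (xb, y₂)).toReal with hc₂def
  have hc₁ : a (xb, y₁) = (c₁ : EReal) := (EReal.coe_toReal hd₁.ne (hbot _)).symm
  have hc₂ : a (xb, y₂) = (c₂ : EReal) := (EReal.coe_toReal hd₂.ne (hbot _)).symm
  set S₁ := SubLscE (fun x => a (x, y₁)) 0 xb with hS₁def
  set S₂ := SubLscE (fun x => a (x, y₂)) 0 xb with hS₂def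
  have hconv₁ : Convex ℝ S₁ := subLscE_convex _ _ c₁ hc₁
  have hconv₂ : Convex ℝ S₂ := subLscE_convex _ _ c₂ hc₂
  have key : ∃ t : ℝ, ∃ p₁ p₂ : ℝ × X, 0 ≤ t ∧ t ≤ 1 ∧
      (t ≠ 0 → p₁ ∈ S₁) ∧ (t ≠ 1 → p₂ ∈ S₂) ∧
      t • p₁ + (1 - t) • p₂ = ((0, 0) : ℝ × X) := by
    rcases S₁.eq_empty_or_nonempty with h₁ | h₁
    · rw [h₁, Set.empty_union, hconv₂.convexHull_eq] at hco
      exact ⟨0, (0, 0), (0, 0), le_refl 0, zero_le_one,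
        fun h => absurd rfl h, fun _ => hco, by simp⟩
    rcases S₂.eq_empty_or_nonempty with h₂ | h₂
    · rw [h₂, Set.union_empty, hconv₁.convexHull_eq] at hco
      exact ⟨1, (0, 0), (0, 0), zero_le_one, le_refl 1,
        fun _ => hco, fun h => absurd rfl h, by simp⟩
    rw [hconv₁.convexHull_union hconv₂ h₁ h₂, mem_convexJoin] at hco
    obtain ⟨p₁, hp₁, p₂, hp₂, α, bb, hα, hbb, hab, heq⟩ := hco
    refine ⟨α, p₁, p₂, hα, by linarith, fun _ => hp₁, fun _ => hp₂, ?_⟩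
    rw [show (1 : ℝ) - α = bb by linarith]
    exact heq
  obtain ⟨t, p₁, p₂, ht0, ht1, hp₁, hp₂, hcomb⟩ := key
  have hv : t • p₁.2 + (1 - t) • p₂.2 = (0 : X) := by
    have := congrArg Prod.snd hcomb; simpa using this
  have ha : t * p₁.1 + (1 - t) * p₂.1 = 0 := by
    have := congrArg Prod.fst hcomb; simpa [smul_eq_mul] using this
  refine le_antisymm ?_ ?_
  · exact iSup_le fun y => le_iInf fun x =>
      (iInf_le (fun x => a (x, y)) x).trans (le_iSup (fun y => a (x, y)) y)
  · refine le_trans (le_iInf fun x => ?_)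
      (le_iSup (fun y => ⨅ x : X, a (x, y)) (t • y₁ + (1 - t) • y₂))
    -- fixed x : show β ≤ a (x, t • y₁ + (1 - t) • y₂)
    have hcv := hconc x y₁ y₂ t ⟨ht0, ht1⟩
    refine le_trans ?_ hcv
    set G₁ : ℝ := ⟪p₁.2, x - xb⟫ - p₁.1 * ‖x‖ ^ 2 + p₁.1 * ‖xb‖ ^ 2 - 0 with hG₁
    set G₂ : ℝ := ⟪p₂.2, x - xb⟫ - p₂.1 * ‖x‖ ^ 2 + p₂.1 * ‖xb‖ ^ 2 - 0 with hG₂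
    have claim1 : ((t * (c₁ + G₁) : ℝ) : EReal) ≤ (t : EReal) * a (x, y₁) := by
      by_cases ht : t = 0
      · subst ht; simp [EReal.zero_mul]
      · have hmem : ((c₁ + G₁ : ℝ) : EReal) ≤ a (x, y₁) := by
          have h0 := (hp₁ ht).2 x
          simp only at h0
          rw [hc₁, ← EReal.coe_add, ← hG₁] at h0
          exact h0
        calc ((t * (c₁ + G₁) : ℝ) : EReal) = (t : EReal) * ((c₁ + G₁ : ℝ) : EReal) := by
              rw [← EReal.coe_mul]
          _ ≤ (t : EReal) * a (x, y₁) :=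
              mul_le_mul_of_nonneg_left hmem (EReal.coe_nonneg.2 ht0)
    have claim2 : (((1 - t) * (c₂ + G₂) : ℝ) : EReal) ≤ ((1 - t : ℝ) : EReal) * a (x, y₂) := by
      by_cases ht : t = 1
      · subst ht; norm_num [EReal.zero_mul]
      · have hmem : ((c₂ + G₂ : ℝ) : EReal) ≤ a (x, y₂) := by
          have h0 := (hp₂ ht).2 x
          simp only at h0
          rw [hc₂, ← EReal.coe_add, ← hG₂] at h0
          exact h0
        calc (((1 - t) * (c₂ + G₂) : ℝ) : EReal)
            = ((1 - t : ℝ) : EReal) * ((c₂ + G₂ : ℝ) : EReal) := by rw [← EReal.coe_mul]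
          _ ≤ ((1 - t : ℝ) : EReal) * a (x, y₂) :=
              mul_le_mul_of_nonneg_left hmem (EReal.coe_nonneg.2 (by linarith))
    have hsum : ((t * (c₁ + G₁) + (1 - t) * (c₂ + G₂) : ℝ) : EReal) ≤
        (t : EReal) * a (x, y₁) + ((1 - t : ℝ) : EReal) * a (x, y₂) := by
      rw [EReal.coe_add]; exact add_le_add claim1 claim2
    refine le_trans ?_ hsum
    have hI : t * (c₁ + G₁) + (1 - t) * (c₂ + G₂) = t * c₁ + (1 - t) * c₂ := by
      have h1 : ⟪t • p₁.2 + (1 - t) • p₂.2, x - xb⟫ = (0 : ℝ) := by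
        rw [hv, inner_zero_left]
      rw [inner_add_left, real_inner_smul_left, real_inner_smul_left] at h1
      rw [hG₁, hG₂]
      linear_combination h1 + (‖xb‖ ^ 2 - ‖x‖ ^ 2) * ha
    rw [hI]
    have hb₁' : β ≤ (c₁ : EReal) := hc₁ ▸ hb₁
    have hb₂' : β ≤ (c₂ : EReal) := hc₂ ▸ hb₂
    rcases le_total c₁ c₂ with h | h
    · refine le_trans hb₁' (EReal.coe_le_coe_iff.2 ?_); nlinarith
    · refine le_trans hb₂' (EReal.coe_le_coe_iff.2 ?_); nlinarith
end
end
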